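/- There exists a (unique) group homomorphism ψ : H → H satisfying ψ(a) = a², ψ(b) = b, and ψ(s) = s, where a, b, s denote the images of the generators in H. -/
import Mathlib


/-- Generators `a`, `b`, `s` of the presented group `H`. -/
inductive Gen3 : Type
  | a | b | s

open FreeGroup in
/-- The relators `b⁻¹ * a * b * a⁻¹` and `s⁻¹ * a² * s * a⁻⁴`. -/
def relsH : Set (FreeGroup Gen3) :=
  {(of Gen3.b)⁻¹ * of Gen3.a * of Gen3.b * (of Gen3.a)⁻¹,
   (of Gen3.s)⁻¹ * (of Gen3.a) ^ 2 * of Gen3.s * ((of Gen3.a) ^ 4)⁻¹}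

/-- The group `H = ⟨a, b, s ∣ b⁻¹ab = a, s⁻¹a²s = a⁴⟩`. -/
abbrev H : Type := PresentedGroup relsH

/-- The images of the generators `a`, `b`, `s` in `H`. -/
def ha : H := PresentedGroup.of Gen3.a
def hb : H := PresentedGroup.of Gen3.b
def hs : H := PresentedGroup.of Gen3.s

lemma mk_rel_one {α : Type*} {rels : Set (FreeGroup α)} {r : FreeGroup α} (hr : r ∈ rels) :
    PresentedGroup.mk rels r = 1 := by
  have : r ∈ Subgroup.normalClosure rels := Subgroup.subset_normalClosure hr
  exact (QuotientGroup.eq_one_iff r).mpr this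

lemma rel1 : hb⁻¹ * ha * hb * ha⁻¹ = 1 := by
  have := mk_rel_one (rels := relsH) (r := (FreeGroup.of Gen3.b)⁻¹ * FreeGroup.of Gen3.a *
    FreeGroup.of Gen3.b * (FreeGroup.of Gen3.a)⁻¹) (Or.inl rfl)
  simpa [ha, hb, PresentedGroup.of] using this

lemma rel2 : hs⁻¹ * ha ^ 2 * hs * (ha ^ 4)⁻¹ = 1 := by
  have := mk_rel_one (rels := relsH) (r := (FreeGroup.of Gen3.s)⁻¹ * (FreeGroup.of Gen3.a) ^ 2 *
    FreeGroup.of Gen3.s * ((FreeGroup.of Gen3.a) ^ 4)⁻¹) (Or.inr rfl)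
  simpa [ha, hs, PresentedGroup.of] using this

lemma comm_ab : ha * hb = hb * ha := by
  have h := rel1
  group at h ⊢
  -- from hb⁻¹ * ha * hb * ha⁻¹ = 1
  have : hb⁻¹ * ha * hb = ha := by
    have := mul_eq_one_iff_eq_inv.mp rel1
    simpa using this
  calc ha * hb = hb * (hb⁻¹ * ha * hb) := by group
    _ = hb * ha := by rw [this]

lemma conj_s : hs⁻¹ * ha ^ 2 * hs = ha ^ 4 := by
  have := mul_eq_one_iff_eq_inv.mp rel2
  simpa using this

lemma conj_pow' {G : Type*} [Group G] (g x : G) (n : ℕ) :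
    (g⁻¹ * x * g) ^ n = g⁻¹ * x ^ n * g := by
  induction n with
  | zero => simp
  | succ n ih => rw [pow_succ, pow_succ, ih]; group

def fmap : Gen3 → H
  | Gen3.a => ha ^ 2
  | Gen3.b => hb
  | Gen3.s => hs

lemma hrels : ∀ r ∈ relsH, FreeGroup.lift fmap r = 1 := by
  intro r hr
  rcases hr with h | h
  · subst h
    simp [fmap]
    have h1 : hb⁻¹ * ha * hb = ha := by
      have := mul_eq_one_iff_eq_inv.mp rel1
      simpa using this
    have key : hb⁻¹ * ha ^ 2 * hb = ha ^ 2 := by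
      conv_rhs => rw [← h1]
      rw [conj_pow']
    calc hb⁻¹ * ha ^ 2 * hb * (ha ^ 2)⁻¹ = (hb⁻¹ * ha ^ 2 * hb) * (ha ^ 2)⁻¹ := by group
      _ = ha ^ 2 * (ha ^ 2)⁻¹ := by rw [key]
      _ = 1 := by group
  · subst h
    simp [fmap]
    have key : hs⁻¹ * (ha ^ 2) ^ 2 * hs = (ha ^ 2) ^ 4 := by
      calc hs⁻¹ * (ha ^ 2) ^ 2 * hs
          = (hs⁻¹ * ha ^ 2 * hs) ^ 2 := (conj_pow' hs (ha ^ 2) 2).symm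
        _ = (ha ^ 2) ^ 4 := by rw [conj_s]; group
    calc hs⁻¹ * (ha ^ 2) ^ 2 * hs * ((ha ^ 2) ^ 4)⁻¹
        = (hs⁻¹ * (ha ^ 2) ^ 2 * hs) * ((ha ^ 2) ^ 4)⁻¹ := by group
      _ = (ha ^ 2) ^ 4 * ((ha ^ 2) ^ 4)⁻¹ := by rw [key]
      _ = 1 := by group

/-- There is a unique endomorphism `ψ` of `H` with `ψ(a) = a²`, `ψ(b) = b`, `ψ(s) = s`. -/
theorem exists_unique_psi :
    ∃! ψ : H →* H, ψ ha = ha ^ 2 ∧ ψ hb = hb ∧ ψ hs = hs := by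
  refine ⟨PresentedGroup.toGroup hrels, ⟨?_, ?_, ?_⟩, ?_⟩
  · exact PresentedGroup.toGroup.of hrels
  · exact PresentedGroup.toGroup.of hrels
  · exact PresentedGroup.toGroup.of hrels
  · rintro ψ ⟨h1, h2, h3⟩
    apply PresentedGroup.ext
    intro x
    have key : ∀ y : Gen3, PresentedGroup.toGroup hrels (PresentedGroup.of y) = fmap y :=
      fun y => PresentedGroup.toGroup.of hrels
    cases x
    · exact h1.trans (key Gen3.a).symm
    · exact h2.trans (key Gen3.b).symm
    · exact h3.trans (key Gen3.s).symm
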